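/- Let G₁ and G₂ be groups. If G₁ satisfies the power alternative with uniform exponent m and G₂ satisfies the power alternative with uniform exponent n, then the direct product G₁ × G₂ satisfies the power alternative with uniform exponent lcm(m, n). -/

import Mathlib

def FreelyGenerateF2 {G : Type*} [Group G] (x y : G) : Prop :=
  Function.Injective (FreeGroup.lift (fun i : Fin 2 => if i = 0 then x else y) :
    FreeGroup (Fin 2) →* G)

def UniformPowerAlternative (G : Type*) [Group G] (n : ℕ) : Prop :=
  ∀ g h : G, Commute (g ^ n) (h ^ n) ∨ FreelyGenerateF2 (g ^ n) (h ^ n)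

/-!
Since `g ^ (c * m) = (g ^ c) ^ m`, the power alternative passes to multiples of the exponent, so
both factors satisfy it with exponent `lcm m n`. In the product, the powers either commute in both
coordinates, or freely generate in one of them, and free generation lifts along a projection.
-/

lemma FreelyGenerateF2.of_map {G H : Type*} [Group G] [Group H] (φ : G →* H) {x y : G}
    (h : FreelyGenerateF2 (φ x) (φ y)) : FreelyGenerateF2 x y := by
  have hcomp : φ.comp (FreeGroup.lift fun i : Fin 2 => if i = 0 then x else y) =
      FreeGroup.lift fun i : Fin 2 => if i = 0 then φ x else φ y :=
    FreeGroup.ext_hom _ _ fun i => by simp [apply_ite φ]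
  refine Function.Injective.of_comp (f := φ) ?_
  rw [← MonoidHom.coe_comp, hcomp]
  exact h

namespace UniformPowerAlternative

lemma of_dvd {G : Type*} [Group G] {m k : ℕ} (h : UniformPowerAlternative G m) (hmk : m ∣ k) :
    UniformPowerAlternative G k := by
  obtain ⟨c, rfl⟩ := hmk
  intro x y
  simpa only [pow_mul'] using h (x ^ c) (y ^ c)

lemma prod {G₁ G₂ : Type*} [Group G₁] [Group G₂] {N : ℕ} (h₁ : UniformPowerAlternative G₁ N)
    (h₂ : UniformPowerAlternative G₂ N) : UniformPowerAlternative (G₁ × G₂) N := by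
  intro g h
  rcases h₁ g.1 h.1 with hc₁ | hf₁
  · rcases h₂ g.2 h.2 with hc₂ | hf₂
    · exact Or.inl (Commute.prod hc₁ hc₂)
    · exact Or.inr (FreelyGenerateF2.of_map (MonoidHom.snd G₁ G₂) hf₂)
  · exact Or.inr (FreelyGenerateF2.of_map (MonoidHom.fst G₁ G₂) hf₁)

end UniformPowerAlternative

/-- the uniform power alternative is stable under direct products,
with exponent the lcm of the two exponents. -/
theorem uniform_power_alternative_prod
    {G₁ G₂ : Type*} [Group G₁] [Group G₂] (m n : ℕ)
    (h₁ : UniformPowerAlternative G₁ m) (h₂ : UniformPowerAlternative G₂ n) :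
    UniformPowerAlternative (G₁ × G₂) (Nat.lcm m n) :=
  (h₁.of_dvd (Nat.dvd_lcm_left m n)).prod (h₂.of_dvd (Nat.dvd_lcm_right m n))
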